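/- Let α : I → S²(p, r) be a closed C³ unit-speed curve on a sphere in ℝ³ with nonvanishing curvature. Then the total torsion of α vanishes: ∮ τ(s) ds = 0. -/

import Mathlib

/-!
Write `a = α - p`, `T = α'`, `A = α''`. Differentiating `a ⬝ a = r²` and `T ⬝ T = 1` gives
`a ⬝ T = 0`, `T ⬝ A = 0`, `a ⬝ A = -1` and `a ⬝ α''' = 0`. Expanding in the orthogonal frame
`T, A, T × A`, these relations turn the torsion `(T × A) ⬝ α''' / |A|²` into the derivative of
`arctan (a ⬝ T × A)`, and the closing conditions make that function take the same value at `0`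
and at `L`.
-/

noncomputable def edot (x y : Fin 3 → ℝ) : ℝ := ∑ i, x i * y i

noncomputable def enorm3 (x : Fin 3 → ℝ) : ℝ := Real.sqrt (edot x x)

noncomputable def cross (u v : Fin 3 → ℝ) : Fin 3 → ℝ :=
  ![u 1 * v 2 - u 2 * v 1, u 2 * v 0 - u 0 * v 2, u 0 * v 1 - u 1 * v 0]

noncomputable def torsion (α : ℝ → Fin 3 → ℝ) (s : ℝ) : ℝ :=
  edot (cross (deriv α s) (deriv (deriv α) s)) (deriv (deriv (deriv α)) s) /
    (enorm3 (cross (deriv α s) (deriv (deriv α) s))) ^ 2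

open Matrix

lemma edot_eq_dotProduct (x y : Fin 3 → ℝ) : edot x y = x ⬝ᵥ y := rfl

lemma cross_eq_crossProduct (u v : Fin 3 → ℝ) : cross u v = u ⨯₃ v := (cross_apply u v).symm

lemma enorm3_sq (x : Fin 3 → ℝ) : enorm3 x ^ 2 = x ⬝ᵥ x :=
  Real.sq_sqrt (Finset.sum_nonneg fun i _ => mul_self_nonneg (x i))

section VectorAlgebra

variable {R : Type*} [CommRing R]

lemma dotProduct_cross_mul_dotProduct_cross (x y u v : Fin 3 → R) :
    (x ⬝ᵥ u ⨯₃ v) * (y ⬝ᵥ u ⨯₃ v) =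
      det !![x ⬝ᵥ y, x ⬝ᵥ u, x ⬝ᵥ v; u ⬝ᵥ y, u ⬝ᵥ u, u ⬝ᵥ v; v ⬝ᵥ y, v ⬝ᵥ u, v ⬝ᵥ v] := by
  simp only [dotProduct, cross_apply, Fin.sum_univ_three, cons_val_zero, cons_val_one, cons_val,
    det_fin_three, of_apply, cons_val', cons_val_fin_one]
  ring

lemma dotProduct_cross_mul_dotProduct_cross_of_unit_orthogonal {x y u v : Fin 3 → R}
    (huu : u ⬝ᵥ u = 1) (huv : u ⬝ᵥ v = 0) :
    (x ⬝ᵥ u ⨯₃ v) * (y ⬝ᵥ u ⨯₃ v) =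
      (v ⬝ᵥ v) * (x ⬝ᵥ y) - (v ⬝ᵥ v) * (x ⬝ᵥ u) * (y ⬝ᵥ u) - (x ⬝ᵥ v) * (y ⬝ᵥ v) := by
  rw [dotProduct_cross_mul_dotProduct_cross, det_fin_three]
  simp only [dotProduct_comm u y, huu, huv, dotProduct_comm v y, dotProduct_comm v u, of_apply,
    cons_val', cons_val_zero, cons_val_fin_one, cons_val_one, cons_val]
  ring

lemma dotProduct_cross_mul_dotProduct_self_of_frame {a T A C : Fin 3 → R}
    (hTT : T ⬝ᵥ T = 1) (haT : a ⬝ᵥ T = 0) (hTA : T ⬝ᵥ A = 0) (haA : a ⬝ᵥ A = -1)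
    (haC : a ⬝ᵥ C = 0) :
    (a ⬝ᵥ T ⨯₃ C) * (A ⬝ᵥ A) = (T ⨯₃ A ⬝ᵥ C) * (1 + (a ⬝ᵥ T ⨯₃ A) ^ 2) := by
  have hAC := dotProduct_cross_mul_dotProduct_cross_of_unit_orthogonal (x := a) (y := C) hTT hTA
  have hTC :=
    dotProduct_cross_mul_dotProduct_cross_of_unit_orthogonal (x := a) (y := T ⨯₃ C) hTT hTA
  have hTCW : T ⨯₃ C ⬝ᵥ T ⨯₃ A = C ⬝ᵥ A := by rw [cross_dot_cross, hTT, hTA]; ring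
  have hTCA : T ⨯₃ C ⬝ᵥ A = -(T ⨯₃ A ⬝ᵥ C) := by
    rw [dotProduct_comm, triple_product_permutation, triple_product_permutation,
      ← cross_anticomm T A, dotProduct_neg, dotProduct_comm C]
  rw [haT, haA, haC, dotProduct_comm C] at hAC
  rw [haT, haA, hTCW, hTCA] at hTC
  linear_combination -hTC - (a ⬝ᵥ T ⨯₃ A) * hAC

end VectorAlgebra

section Calculus

variable {𝕜 : Type*} [NontriviallyNormedField 𝕜] [CompleteSpace 𝕜] {x : 𝕜}

theorem HasDerivAt.dotProduct {ι : Type*} [Fintype ι] {f g : 𝕜 → ι → 𝕜} {f' g' : ι → 𝕜}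
    (hf : HasDerivAt f f' x) (hg : HasDerivAt g g' x) :
    HasDerivAt (fun t => f t ⬝ᵥ g t) (f' ⬝ᵥ g x + f x ⬝ᵥ g') x := by
  simpa [add_comm] using
    (dotProductBilin 𝕜 𝕜).toContinuousBilinearMap.hasDerivAt_of_bilinear (fun _ => hf) fun _ => hg

theorem HasDerivAt.crossProduct {f g : 𝕜 → Fin 3 → 𝕜} {f' g' : Fin 3 → 𝕜}
    (hf : HasDerivAt f f' x) (hg : HasDerivAt g g' x) :
    HasDerivAt (fun t => f t ⨯₃ g t) (f' ⨯₃ g x + f x ⨯₃ g') x := by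
  simpa [add_comm] using
    (_root_.crossProduct (R := 𝕜)).toContinuousBilinearMap.hasDerivAt_of_bilinear
      (fun _ => hf) fun _ => hg

theorem Continuous.crossProduct {X : Type*} [TopologicalSpace X] {f g : X → Fin 3 → 𝕜}
    (hf : Continuous f) (hg : Continuous g) : Continuous fun t => f t ⨯₃ g t :=
  (_root_.crossProduct (R := 𝕜)).toContinuousBilinearMap.continuous₂.comp₂ hf hg

theorem HasDerivAt.dotProduct_add_eq_zero_of_const {ι : Type*} [Fintype ι] {f g : 𝕜 → ι → 𝕜}
    {f' g' : ι → 𝕜} {c : 𝕜} (hf : HasDerivAt f f' x) (hg : HasDerivAt g g' x)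
    (hc : ∀ t, f t ⬝ᵥ g t = c) : f' ⬝ᵥ g x + f x ⬝ᵥ g' = 0 :=
  (hf.dotProduct hg).unique (by simpa only [hc] using hasDerivAt_const x c)

theorem hasDerivAt_dotProduct_cross_of_hasDerivAt {a T A : 𝕜 → Fin 3 → 𝕜} {C : Fin 3 → 𝕜}
    (ha : HasDerivAt a (T x) x) (hT : HasDerivAt T (A x) x) (hA : HasDerivAt A C x) :
    HasDerivAt (fun t => a t ⬝ᵥ T t ⨯₃ A t) (a x ⬝ᵥ T x ⨯₃ C) x := by
  convert ha.dotProduct (hT.crossProduct hA) using 1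
  rw [dot_self_cross, cross_self, zero_add, zero_add]

end Calculus

section SphericalCurve

variable {a T A C : ℝ → Fin 3 → ℝ} {r : ℝ}

theorem spherical_frame_relations (ha : ∀ t, HasDerivAt a (T t) t)
    (hT : ∀ t, HasDerivAt T (A t) t) (hA : ∀ t, HasDerivAt A (C t) t)
    (hsph : ∀ t, a t ⬝ᵥ a t = r ^ 2) (hunit : ∀ t, T t ⬝ᵥ T t = 1) (t : ℝ) :
    a t ⬝ᵥ T t = 0 ∧ T t ⬝ᵥ A t = 0 ∧ a t ⬝ᵥ A t = -1 ∧ a t ⬝ᵥ C t = 0 := by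
  have haT (t : ℝ) : a t ⬝ᵥ T t = 0 := by
    have := (ha t).dotProduct_add_eq_zero_of_const (ha t) hsph
    rw [dotProduct_comm] at this
    linarith
  have hTA (t : ℝ) : T t ⬝ᵥ A t = 0 := by
    have := (hT t).dotProduct_add_eq_zero_of_const (hT t) hunit
    rw [dotProduct_comm] at this
    linarith
  have haA (t : ℝ) : a t ⬝ᵥ A t = -1 := by
    have := (ha t).dotProduct_add_eq_zero_of_const (hT t) haT
    linarith [hunit t]
  have haC : a t ⬝ᵥ C t = 0 := by
    have := (ha t).dotProduct_add_eq_zero_of_const (hA t) haA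
    linarith [hTA t]
  exact ⟨haT t, hTA t, haA t, haC⟩

theorem hasDerivAt_arctan_dotProduct_cross (ha : ∀ t, HasDerivAt a (T t) t)
    (hT : ∀ t, HasDerivAt T (A t) t) (hA : ∀ t, HasDerivAt A (C t) t)
    (hsph : ∀ t, a t ⬝ᵥ a t = r ^ 2) (hunit : ∀ t, T t ⬝ᵥ T t = 1) (hκ : ∀ t, A t ≠ 0)
    (t : ℝ) :
    HasDerivAt (fun t => Real.arctan (a t ⬝ᵥ T t ⨯₃ A t))
      (T t ⨯₃ A t ⬝ᵥ C t / (A t ⬝ᵥ A t)) t := by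
  obtain ⟨haT, hTA, haA, haC⟩ := spherical_frame_relations ha hT hA hsph hunit t
  have hk : A t ⬝ᵥ A t ≠ 0 := mt dotProduct_self_eq_zero.mp (hκ t)
  convert (hasDerivAt_dotProduct_cross_of_hasDerivAt (ha t) (hT t) (hA t)).arctan using 1
  field_simp
  linear_combination -dotProduct_cross_mul_dotProduct_self_of_frame (hunit t) haT hTA haA haC

end SphericalCurve

lemma torsion_eq_of_unit_speed {α : ℝ → Fin 3 → ℝ} {t : ℝ}
    (hunit : deriv α t ⬝ᵥ deriv α t = 1) (hTA : deriv α t ⬝ᵥ deriv (deriv α) t = 0) :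
    torsion α t = deriv α t ⨯₃ deriv (deriv α) t ⬝ᵥ deriv (deriv (deriv α)) t /
      (deriv (deriv α) t ⬝ᵥ deriv (deriv α) t) := by
  rw [torsion, enorm3_sq, cross_eq_crossProduct, edot_eq_dotProduct, cross_dot_cross, hunit, hTA]
  ring

theorem stmt5_general (α : ℝ → Fin 3 → ℝ) (p : Fin 3 → ℝ) (r L : ℝ)
    (hα : ContDiff ℝ 3 α)
    (hunit : ∀ s, edot (deriv α s) (deriv α s) = 1)
    (hsph : ∀ s, edot (α s - p) (α s - p) = r ^ 2)
    (hκ : ∀ s, deriv (deriv α) s ≠ 0)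
    (hc0 : α 0 = α L)
    (hc1 : deriv α 0 = deriv α L)
    (hc2 : deriv (deriv α) 0 = deriv (deriv α) L) :
    ∫ s in (0 : ℝ)..L, torsion α s = 0 := by
  simp only [edot_eq_dotProduct] at hunit hsph
  have hT : ContDiff ℝ 2 (deriv α) := hα.deriv'
  have hA : ContDiff ℝ 1 (deriv (deriv α)) := hT.deriv'
  have hda (t : ℝ) : HasDerivAt (fun t => α t - p) (deriv α t) t :=
    (hα.differentiable (by norm_num) t).hasDerivAt.sub_const p
  have hdT (t : ℝ) : HasDerivAt (deriv α) (deriv (deriv α) t) t :=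
    (hT.differentiable (by norm_num) t).hasDerivAt
  have hdA (t : ℝ) : HasDerivAt (deriv (deriv α)) (deriv (deriv (deriv α)) t) t :=
    (hA.differentiable one_ne_zero t).hasDerivAt
  have htorsion (t : ℝ) := torsion_eq_of_unit_speed (hunit t)
    (spherical_frame_relations hda hdT hdA hsph hunit t).2.1
  have hcont : Continuous (torsion α) := by
    rw [funext htorsion]
    exact ((hT.continuous.crossProduct hA.continuous).dotProduct (hA.continuous_deriv le_rfl)).div
      (hA.continuous.dotProduct hA.continuous) fun t => mt dotProduct_self_eq_zero.mp (hκ t)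
  rw [intervalIntegral.integral_eq_sub_of_hasDerivAt (fun t _ => htorsion t ▸
      hasDerivAt_arctan_dotProduct_cross hda hdT hdA hsph hunit hκ t)
    (hcont.intervalIntegrable 0 L)]
  simp only [hc0, hc1, hc2, sub_self]

/-- The total torsion of a closed `C³` unit-speed spherical curve with
nonvanishing curvature vanishes: `∮ τ ds = 0`. -/
theorem stmt5 (α : ℝ → Fin 3 → ℝ) (p : Fin 3 → ℝ) (r L : ℝ) (hr : 0 < r) (hL : 0 < L)
    (hα : ContDiff ℝ 3 α)
    (hunit : ∀ s, edot (deriv α s) (deriv α s) = 1)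
    (hsph : ∀ s, edot (α s - p) (α s - p) = r ^ 2)
    (hκ : ∀ s, deriv (deriv α) s ≠ 0)
    (hc0 : α 0 = α L)
    (hc1 : deriv α 0 = deriv α L)
    (hc2 : deriv (deriv α) 0 = deriv (deriv α) L)
    (hc3 : deriv (deriv (deriv α)) 0 = deriv (deriv (deriv α)) L) :
    ∫ s in (0 : ℝ)..L, torsion α s = 0 :=
  stmt5_general α p r L hα hunit hsph hκ hc0 hc1 hc2
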